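/- Let A_0 = [0, 1/3) × ℤ₂ × ℤ₃ ⊆ F. The image of A_0 under multiplication by 3/2 on G/Γ, computed in F, is {rep((3/2)·y) : y ∈ A_0} = ([0, 1/2) × ℤ₂ × 3ℤ₃) ∪ ([1/2, 1) × ℤ₂ × (3ℤ₃ + 2)), where 3ℤ₃ = {3w : w ∈ ℤ₃} and 3ℤ₃ + 2 = {3w + 2 : w ∈ ℤ₃}. -/

import Mathlib

open Set

noncomputable section

/-- The ambient group `G = ℝ × ℚ₂ × ℚ₃`. -/
abbrev G : Type := ℝ × ℚ_[2] × ℚ_[3]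

/-- The diagonal embedding of `ℚ` into `G`. -/
def Δ (r : ℚ) : G := ((r : ℝ), (r : ℚ_[2]), (r : ℚ_[3]))

/-- `ℤ[1/6]`, the rationals expressible with denominator `6^k`. -/
def zInv6 : Set ℚ := {q | ∃ (z : ℤ) (k : ℕ), q = z / 6 ^ k}

/-- `Γ = Δ(ℤ[1/6])`. -/
def Γ : Set G := Δ '' zInv6

/-- The fundamental domain `F = [0,1) × ℤ₂ × ℤ₃`. -/
def F : Set G := {x | x.1 ∈ Set.Ico (0 : ℝ) 1 ∧ ‖x.2.1‖ ≤ 1 ∧ ‖x.2.2‖ ≤ 1}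

/-- Coordinatewise multiplication by a rational on `G`. -/
def act (q : ℚ) (x : G) : G :=
  ((q : ℝ) * x.1, (q : ℚ_[2]) * x.2.1, (q : ℚ_[3]) * x.2.2)

/-!
An element of `ℤ[1/6]` that is both a `2`-adic and a `3`-adic integer is an integer, so two
points of `F` that differ by an element of `Γ` differ by an integer of absolute value `< 1` and
coincide: `rep x = u` as soon as `u ∈ F` and `x - u ∈ Δ(ℤ[1/6])`.

For `y = (t, a, b) ∈ A₀` the point `(3/2)·y` already lies in `F` when `3a` is even in `ℤ₂`, and
then in the lower piece. When `3a` is odd, adding `Δ(1/2)` makes the `2`-adic coordinate integral,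
moves the real coordinate into `[1/2, 1)` and the `3`-adic one into `3ℤ₃ + 2`. Conversely, a point
of either piece is recovered from `(2/3)·u` or `(2/3)·(u - Δ(1/2))`.
-/

section Padic

variable {p : ℕ} [hp : Fact p.Prime]

theorem Padic.coprime_den_of_norm_ratCast_le_one {q : ℚ} (h : ‖(q : ℚ_[p])‖ ≤ 1) :
    p.Coprime q.den := by
  simpa [PadicInt.isUnit_iff] using PadicInt.isUnit_den q h

theorem Padic.exists_norm_sub_natCast_div_le_one {x : ℚ_[p]} (hx : ‖x‖ ≤ 1) :
    ∃ n : ℕ, n < p ∧ ‖(x - n) / p‖ ≤ 1 := by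
  obtain ⟨n, hnp, hn⟩ := PadicInt.exists_mem_range ⟨x, hx⟩
  rw [PadicInt.maximalIdeal_eq_span_p, Ideal.mem_span_singleton] at hn
  obtain ⟨t, ht⟩ := hn
  have hxt : x - n = p * (t : ℚ_[p]) := by
    have := congrArg ((↑) : ℤ_[p] → ℚ_[p]) ht
    push_cast at this
    exact this
  refine ⟨n, hnp, ?_⟩
  rw [hxt, mul_div_cancel_left₀ _ (Nat.cast_ne_zero.2 hp.out.ne_zero)]
  exact t.2

theorem Padic.norm_ofNat_le_one (n : ℕ) [n.AtLeastTwo] : ‖(OfNat.ofNat n : ℚ_[p])‖ ≤ 1 := by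
  exact_mod_cast Padic.norm_int_le_one (p := p) n

end Padic

theorem sub_mem_zInv6 {a b : ℚ} (ha : a ∈ zInv6) (hb : b ∈ zInv6) : a - b ∈ zInv6 := by
  obtain ⟨z, k, rfl⟩ := ha
  obtain ⟨w, m, rfl⟩ := hb
  exact ⟨z * 6 ^ m - w * 6 ^ k, k + m, by push_cast; field_simp; ring⟩

theorem zero_mem_zInv6 : (0 : ℚ) ∈ zInv6 := ⟨0, 0, by norm_num⟩

theorem half_mem_zInv6 : (1 / 2 : ℚ) ∈ zInv6 := ⟨3, 1, by norm_num⟩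

theorem den_eq_one_of_mem_zInv6 {q : ℚ} (hq : q ∈ zInv6) (h2 : ‖(q : ℚ_[2])‖ ≤ 1)
    (h3 : ‖(q : ℚ_[3])‖ ≤ 1) : q.den = 1 := by
  obtain ⟨z, k, rfl⟩ := hq
  have hdvd : (z / 6 ^ k : ℚ).den ∣ 6 ^ k := by
    have := Rat.den_dvd z (6 ^ k)
    rw [Rat.divInt_eq_div] at this
    exact_mod_cast this
  have hcop : Nat.Coprime (6 ^ k) (z / 6 ^ k : ℚ).den :=
    Nat.Coprime.pow_left k (Nat.Coprime.mul_left (Padic.coprime_den_of_norm_ratCast_le_one h2)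
      (Padic.coprime_den_of_norm_ratCast_le_one h3))
  exact Nat.Coprime.eq_one_of_dvd hcop.symm hdvd

theorem eq_zero_of_mem_zInv6 {q : ℚ} (hq : q ∈ zInv6) (h2 : ‖(q : ℚ_[2])‖ ≤ 1)
    (h3 : ‖(q : ℚ_[3])‖ ≤ 1) (hr : |(q : ℝ)| < 1) : q = 0 := by
  rw [← Rat.coe_int_num_of_den_eq_one (den_eq_one_of_mem_zInv6 hq h2 h3)] at hr ⊢
  have : |q.num| < 1 := by exact_mod_cast hr
  rw [abs_lt] at this
  simp only [Int.cast_eq_zero]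
  omega

theorem Δ_zero : Δ 0 = 0 := by
  ext <;> simp [Δ]

theorem Δ_sub (a b : ℚ) : Δ (a - b) = Δ a - Δ b := by
  simp [Δ]

theorem eq_of_mem_F_of_sub_mem_Γ {x y : G} (hx : x ∈ F) (hy : y ∈ F) (h : x - y ∈ Γ) :
    x = y := by
  obtain ⟨q, hq, hxy⟩ := h
  obtain ⟨⟨hx0, hx1⟩, hx2, hx3⟩ := hx
  obtain ⟨⟨hy0, hy1⟩, hy2, hy3⟩ := hy
  have hq0 : q = 0 := by
    refine eq_zero_of_mem_zInv6 hq ?_ ?_ ?_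
    · rw [show (q : ℚ_[2]) = x.2.1 - y.2.1 from congrArg (·.2.1) hxy]
      exact (PadicInt.subring 2).sub_mem hx2 hy2
    · rw [show (q : ℚ_[3]) = x.2.2 - y.2.2 from congrArg (·.2.2) hxy]
      exact (PadicInt.subring 3).sub_mem hx3 hy3
    · rw [show (q : ℝ) = x.1 - y.1 from congrArg (·.1) hxy, abs_lt]
      constructor <;> linarith
  rw [hq0, Δ_zero] at hxy
  exact sub_eq_zero.1 hxy.symm

theorem rep_eq_of_sub_eq_Δ {rep : G → G} (hrep : ∀ x : G, rep x ∈ F ∧ x - rep x ∈ Γ)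
    {x u : G} {r : ℚ} (hu : u ∈ F) (hr : r ∈ zInv6) (hxu : x - u = Δ r) : rep x = u := by
  obtain ⟨hF, s, hs, hxs⟩ := hrep x
  refine eq_of_mem_F_of_sub_mem_Γ hF hu ⟨r - s, sub_mem_zInv6 hr hs, ?_⟩
  rw [Δ_sub, ← hxu, hxs]
  abel

theorem act_act (q r : ℚ) (x : G) : act q (act r x) = act (q * r) x := by
  simp only [act, Rat.cast_mul, mul_assoc]

theorem act_one (x : G) : act 1 x = x := by
  simp [act]

theorem norm_three_halves_mul_le_one_or {a : ℚ_[2]} (ha : ‖a‖ ≤ 1) :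
    ‖((3 / 2 : ℚ) : ℚ_[2]) * a‖ ≤ 1 ∨ ‖((3 / 2 : ℚ) : ℚ_[2]) * a + ((1 / 2 : ℚ) : ℚ_[2])‖ ≤ 1 := by
  obtain ⟨n, hn, hdiv⟩ := Padic.exists_norm_sub_natCast_div_le_one
    ((PadicInt.subring 2).mul_mem (Padic.norm_ofNat_le_one 3) ha)
  interval_cases n
  · left
    convert hdiv using 2
    push_cast
    ring
  · right
    have h := (PadicInt.subring 2).add_mem hdiv (PadicInt.subring 2).one_mem
    rw [PadicInt.mem_subring_iff] at h
    convert h using 2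
    push_cast
    ring

def A₀ : Set G := {x | x.1 ∈ Ico (0 : ℝ) (1 / 3) ∧ ‖x.2.1‖ ≤ 1 ∧ ‖x.2.2‖ ≤ 1}

def lowerPiece : Set G :=
  {u | u.1 ∈ Ico (0 : ℝ) (1 / 2) ∧ ‖u.2.1‖ ≤ 1 ∧ ∃ w : ℚ_[3], ‖w‖ ≤ 1 ∧ u.2.2 = 3 * w}

def upperPiece : Set G :=
  {u | u.1 ∈ Ico (1 / 2 : ℝ) 1 ∧ ‖u.2.1‖ ≤ 1 ∧ ∃ w : ℚ_[3], ‖w‖ ≤ 1 ∧ u.2.2 = 3 * w + 2}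

theorem lowerPiece_subset_F : lowerPiece ⊆ F := by
  rintro u ⟨⟨hs0, hs1⟩, hc, w, hw, hu⟩
  refine ⟨⟨hs0, by linarith⟩, hc, ?_⟩
  rw [hu]
  exact (PadicInt.subring 3).mul_mem (Padic.norm_ofNat_le_one 3) hw

theorem upperPiece_subset_F : upperPiece ⊆ F := by
  rintro u ⟨⟨hs0, hs1⟩, hc, w, hw, hu⟩
  refine ⟨⟨by linarith, hs1⟩, hc, ?_⟩
  rw [hu]
  exact (PadicInt.subring 3).add_mem
    ((PadicInt.subring 3).mul_mem (Padic.norm_ofNat_le_one 3) hw) (Padic.norm_ofNat_le_one 2)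

section Image

variable {rep : G → G}

theorem rep_act_three_halves_mem
    (hrep : ∀ x : G, rep x ∈ F ∧ x - rep x ∈ Γ) {y : G} (hy : y ∈ A₀) :
    rep (act (3 / 2) y) ∈ lowerPiece ∪ upperPiece := by
  obtain ⟨⟨ht0, ht1⟩, ha, hb⟩ := hy
  have hb2 : ‖((1 / 2 : ℚ) : ℚ_[3]) * y.2.2‖ ≤ 1 :=
    (PadicInt.subring 3).mul_mem (Padic.norm_rat_le_one (by norm_num)) hb
  have hb1 : ‖((1 / 2 : ℚ) : ℚ_[3]) * (y.2.2 - 1)‖ ≤ 1 :=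
    (PadicInt.subring 3).mul_mem (Padic.norm_rat_le_one (by norm_num))
      ((PadicInt.subring 3).sub_mem hb (PadicInt.subring 3).one_mem)
  rcases norm_three_halves_mul_le_one_or ha with ha' | ha'
  · have hu : act (3 / 2) y ∈ lowerPiece := by
      refine ⟨⟨?_, ?_⟩, ha', _, hb2, ?_⟩ <;> simp only [act] <;> push_cast
      · positivity
      · linarith
      · ring
    rw [rep_eq_of_sub_eq_Δ hrep (lowerPiece_subset_F hu) zero_mem_zInv6
      (by rw [sub_self, Δ_zero])]
    exact Or.inl hu
  · have hu : act (3 / 2) y + Δ (1 / 2) ∈ upperPiece := by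
      refine ⟨⟨?_, ?_⟩, ha', _, hb1, ?_⟩ <;>
        simp only [act, Δ, Prod.fst_add, Prod.snd_add] <;> push_cast
      · linarith
      · linarith
      · ring
    rw [rep_eq_of_sub_eq_Δ hrep (upperPiece_subset_F hu)
      (sub_mem_zInv6 zero_mem_zInv6 half_mem_zInv6) (by rw [Δ_sub, Δ_zero]; abel)]
    exact Or.inr hu

theorem exists_rep_act_three_halves_eq_of_mem_lowerPiece
    (hrep : ∀ x : G, rep x ∈ F ∧ x - rep x ∈ Γ) {u : G} (hu : u ∈ lowerPiece) :
    ∃ y ∈ A₀, rep (act (3 / 2) y) = u := by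
  obtain ⟨⟨hs0, hs1⟩, hc, w, hw, hu3⟩ := id hu
  have hw2 : ((2 / 3 : ℚ) : ℚ_[3]) * u.2.2 = 2 * w := by
    rw [hu3]; push_cast; ring
  refine ⟨act (2 / 3) u, ⟨⟨?_, ?_⟩, ?_, ?_⟩, ?_⟩
  · simp only [act]; push_cast; positivity
  · simp only [act]; push_cast; linarith
  · exact (PadicInt.subring 2).mul_mem (Padic.norm_rat_le_one (by norm_num)) hc
  · simp only [act, hw2]
    exact (PadicInt.subring 3).mul_mem (Padic.norm_ofNat_le_one 2) hw
  · rw [act_act, show (3 / 2 : ℚ) * (2 / 3) = 1 by norm_num, act_one]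
    exact rep_eq_of_sub_eq_Δ hrep (lowerPiece_subset_F hu) zero_mem_zInv6
      (by rw [sub_self, Δ_zero])

theorem exists_rep_act_three_halves_eq_of_mem_upperPiece
    (hrep : ∀ x : G, rep x ∈ F ∧ x - rep x ∈ Γ) {u : G} (hu : u ∈ upperPiece) :
    ∃ y ∈ A₀, rep (act (3 / 2) y) = u := by
  obtain ⟨⟨hs0, hs1⟩, hc, w, hw, hu3⟩ := id hu
  have hc2 : ((2 / 3 : ℚ) : ℚ_[2]) * (u.2.1 - ((1 / 2 : ℚ) : ℚ_[2])) =
      ((2 / 3 : ℚ) : ℚ_[2]) * u.2.1 - ((1 / 3 : ℚ) : ℚ_[2]) := by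
    push_cast; ring
  have hw2 : ((2 / 3 : ℚ) : ℚ_[3]) * (u.2.2 - ((1 / 2 : ℚ) : ℚ_[3])) = 2 * w + 1 := by
    rw [hu3]; push_cast; ring
  refine ⟨act (2 / 3) (u - Δ (1 / 2)), ⟨⟨?_, ?_⟩, ?_, ?_⟩, ?_⟩
  · simp only [act, Δ, Prod.fst_sub]; push_cast; linarith
  · simp only [act, Δ, Prod.fst_sub]; push_cast; linarith
  · simp only [act, Δ, Prod.snd_sub, Prod.fst_sub, hc2]
    exact (PadicInt.subring 2).sub_mem
      ((PadicInt.subring 2).mul_mem (Padic.norm_rat_le_one (by norm_num)) hc)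
      (Padic.norm_rat_le_one (by norm_num))
  · simp only [act, Δ, Prod.snd_sub, hw2]
    exact (PadicInt.subring 3).add_mem
      ((PadicInt.subring 3).mul_mem (Padic.norm_ofNat_le_one 2) hw) (PadicInt.subring 3).one_mem
  · rw [act_act, show (3 / 2 : ℚ) * (2 / 3) = 1 by norm_num, act_one]
    exact rep_eq_of_sub_eq_Δ hrep (upperPiece_subset_F hu)
      (sub_mem_zInv6 zero_mem_zInv6 half_mem_zInv6) (by rw [Δ_sub, Δ_zero]; abel)

end Image

/-- The image of the atom `A₀ = [0,1/3) × ℤ₂ × ℤ₃` under multiplication by `3/2` on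
`G/Γ`, computed in `F`, is `([0,1/2) × ℤ₂ × 3ℤ₃) ∪ ([1/2,1) × ℤ₂ × (3ℤ₃+2))`. -/
theorem image_A0_three_halves (rep : G → G)
    (hrep : ∀ x : G, rep x ∈ F ∧ x - rep x ∈ Γ) :
    (fun y => rep (act (3 / 2) y)) ''
        {x : G | x.1 ∈ Set.Ico (0 : ℝ) (1 / 3) ∧ ‖x.2.1‖ ≤ 1 ∧ ‖x.2.2‖ ≤ 1} =
      {u : G | u.1 ∈ Set.Ico (0 : ℝ) (1 / 2) ∧ ‖u.2.1‖ ≤ 1 ∧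
          ∃ w : ℚ_[3], ‖w‖ ≤ 1 ∧ u.2.2 = 3 * w} ∪
      {u : G | u.1 ∈ Set.Ico (1 / 2 : ℝ) 1 ∧ ‖u.2.1‖ ≤ 1 ∧
          ∃ w : ℚ_[3], ‖w‖ ≤ 1 ∧ u.2.2 = 3 * w + 2} := by
  change (fun y => rep (act (3 / 2) y)) '' A₀ = lowerPiece ∪ upperPiece
  refine Subset.antisymm ?_ ?_
  · rintro _ ⟨y, hy, rfl⟩
    exact rep_act_three_halves_mem hrep hy
  · rintro u (hu | hu)
    · exact exists_rep_act_three_halves_eq_of_mem_lowerPiece hrep hu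
    · exact exists_rep_act_three_halves_eq_of_mem_upperPiece hrep hu
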